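/- Let 1 ≤ q ≤ ∞. For any μ₀, μ₁ ∈ 𝒫₁(ℝ^n), the curve τ ↦ (1−τ)μ₀ + τμ₁, τ ∈ [0,1], is a minimal geodesic in (𝒫₁(ℝ^n), MK_{1,q}); in fact MK_{1,q}((1−τ₁)μ₀+τ₁μ₁, (1−τ₂)μ₀+τ₂μ₁) = |τ₁−τ₂| · MK_{1,q}(μ₀, μ₁) for all τ₁, τ₂ ∈ [0,1]. In particular (𝒫₁(ℝ^n), MK_{1,q}) is a geodesic space. -/

import Mathlib

open MeasureTheory ENNReal Filter
open ProbabilityTheory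
open scoped RealInnerProductSpace BoundedContinuousFunction NNReal

noncomputable section

/-- The set of couplings (transport plans) between two measures. -/
def couplings {α β : Type*} [MeasurableSpace α] [MeasurableSpace β]
    (μ : Measure α) (ν : Measure β) : Set (Measure (α × β)) :=
  {γ | γ.map Prod.fst = μ ∧ γ.map Prod.snd = ν}

/-- The `p`-Monge–Kantorovich (Wasserstein) distance, valued in `ℝ≥0∞`. -/
def MK (p : ℝ) {α : Type*} [PseudoEMetricSpace α] [MeasurableSpace α]
    (μ ν : Measure α) : ℝ≥0∞ :=
  (⨅ γ ∈ couplings μ ν, ∫⁻ z, edist z.1 z.2 ^ p ∂γ) ^ (1 / p)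

/-- The `L^q` norm (w.r.t. a measure `σ`) of an `ℝ≥0∞`-valued function. -/
def lqNorm {Ω : Type*} [MeasurableSpace Ω] (q : ℝ≥0∞) (σ : Measure Ω) (f : Ω → ℝ≥0∞) : ℝ≥0∞ :=
  if q = ∞ then essSup f σ else (∫⁻ ω, f ω ^ q.toReal ∂σ) ^ (1 / q.toReal)

/-- The unit sphere `S^{n-1}` in `ℝ^n`. -/
abbrev unitSphere (n : ℕ) := Metric.sphere (0 : EuclideanSpace ℝ (Fin n)) 1

/-- The normalized uniform probability measure `σ_{n-1}` on the unit sphere. -/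
def sphereProb (n : ℕ) : Measure (unitSphere n) :=
  ((volume : Measure (EuclideanSpace ℝ (Fin n))).toSphere Set.univ)⁻¹ •
    (volume : Measure (EuclideanSpace ℝ (Fin n))).toSphere

/-- The Radon transform `R^ω_♯ μ` of a measure: pushforward under `x ↦ ⟨x, ω⟩`. -/
def radon {n : ℕ} (μ : Measure (EuclideanSpace ℝ (Fin n))) (ω : unitSphere n) : Measure ℝ :=
  μ.map (fun x => ⟪x, (ω : EuclideanSpace ℝ (Fin n))⟫)

/-- The sliced `(p,q)`-Monge–Kantorovich metric. -/
def MKpq (p : ℝ) (q : ℝ≥0∞) {n : ℕ} (μ ν : Measure (EuclideanSpace ℝ (Fin n))) : ℝ≥0∞ :=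
  lqNorm q (sphereProb n) (fun ω => MK p (radon μ ω) (radon ν ω))

/-- Membership in `𝒫_p`: a Borel probability measure with finite `p`-th moment. -/
def MemPp (p : ℝ) {E : Type*} [NormedAddCommGroup E] [MeasurableSpace E] (μ : Measure E) : Prop :=
  IsProbabilityMeasure μ ∧ ∫⁻ x, (‖x‖₊ : ℝ≥0∞) ^ p ∂μ ≠ ∞

lemma MK_one {α : Type*} [PseudoEMetricSpace α] [MeasurableSpace α] (μ ν : Measure α) :
    MK 1 μ ν = ⨅ γ ∈ couplings μ ν, ∫⁻ z, edist z.1 z.2 ∂γ := by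
  simp [MK, ENNReal.rpow_one]

lemma MK_le_cost {α : Type*} [PseudoEMetricSpace α] [MeasurableSpace α] {μ ν : Measure α}
    {γ : Measure (α × α)} (h : γ ∈ couplings μ ν) :
    MK 1 μ ν ≤ ∫⁻ z, edist z.1 z.2 ∂γ := by
  rw [MK_one]; exact iInf₂_le γ h

lemma coupling_isProb {α β : Type*} [MeasurableSpace α] [MeasurableSpace β]
    {μ : Measure α} {ν : Measure β} [IsProbabilityMeasure μ]
    {γ : Measure (α × β)} (h : γ ∈ couplings μ ν) : IsProbabilityMeasure γ := by
  constructor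
  have : γ.map Prod.fst Set.univ = 1 := by rw [h.1]; exact measure_univ
  rwa [Measure.map_apply measurable_fst MeasurableSet.univ, Set.preimage_univ] at this

lemma prod_mem_couplings {α β : Type*} [MeasurableSpace α] [MeasurableSpace β]
    (μ : Measure α) (ν : Measure β) [IsProbabilityMeasure μ] [IsProbabilityMeasure ν] :
    μ.prod ν ∈ couplings μ ν := by
  constructor
  · simp [Measure.map_fst_prod]
  · simp [Measure.map_snd_prod]

lemma swap_mem_couplings {α : Type*} [MeasurableSpace α] {μ ν : Measure α}
    {γ : Measure (α × α)} (h : γ ∈ couplings μ ν) : γ.map Prod.swap ∈ couplings ν μ := by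
  constructor
  · rw [Measure.map_map measurable_fst measurable_swap]
    exact h.2
  · rw [Measure.map_map measurable_snd measurable_swap]
    exact h.1

lemma cost_swap (γ : Measure (ℝ × ℝ)) :
    ∫⁻ z, edist z.1 z.2 ∂(γ.map Prod.swap) = ∫⁻ z, edist z.1 z.2 ∂γ := by
  rw [lintegral_map (measurable_fst.edist measurable_snd) measurable_swap]
  simp [edist_comm]

lemma MK_symm (μ ν : Measure ℝ) : MK 1 μ ν = MK 1 ν μ := by
  have h : ∀ (μ ν : Measure ℝ), MK 1 μ ν ≤ MK 1 ν μ := by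
    intro μ ν
    rw [MK_one ν μ]
    refine le_iInf₂ fun γ hγ => ?_
    rw [← cost_swap γ]
    exact MK_le_cost (swap_mem_couplings hγ)
  exact le_antisymm (h μ ν) (h ν μ)

lemma diag_mem_couplings {α : Type*} [MeasurableSpace α] (μ : Measure α) :
    μ.map (fun t => (t, t)) ∈ couplings μ μ := by
  have hm : Measurable (fun t : α => (t, t)) := measurable_id.prodMk measurable_id
  constructor
  · rw [Measure.map_map measurable_fst hm]
    simp [Function.comp_def]
  · rw [Measure.map_map measurable_snd hm]
    simp [Function.comp_def]

lemma cost_diag (μ : Measure ℝ) : ∫⁻ z, edist z.1 z.2 ∂(μ.map (fun t => (t, t))) = 0 := by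
  have hm : Measurable fun t : ℝ => (t, t) := by fun_prop
  rw [lintegral_map (measurable_fst.edist measurable_snd) hm]
  simp

lemma MK_self (μ : Measure ℝ) : MK 1 μ μ = 0 :=
  le_antisymm (by simpa [cost_diag] using MK_le_cost (diag_mem_couplings μ)) zero_le

lemma glue_coupling {μ ν κ : Measure ℝ} [IsProbabilityMeasure μ] [IsProbabilityMeasure ν]
    [IsProbabilityMeasure κ] {γ₁ γ₂ : Measure (ℝ × ℝ)}
    (h₁ : γ₁ ∈ couplings μ ν) (h₂ : γ₂ ∈ couplings ν κ) :
    ∃ γ ∈ couplings μ κ,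
      ∫⁻ z, edist z.1 z.2 ∂γ ≤ ∫⁻ z, edist z.1 z.2 ∂γ₁ + ∫⁻ z, edist z.1 z.2 ∂γ₂ := by
  haveI hp₁ : IsProbabilityMeasure γ₁ := coupling_isProb h₁
  haveI hp₂ : IsProbabilityMeasure γ₂ := coupling_isProb h₂
  set η : Measure (ℝ × ℝ) := γ₁.map Prod.swap with hη
  haveI : IsProbabilityMeasure η := Measure.isProbabilityMeasure_map measurable_swap.aemeasurable
  have hηfst : η.fst = ν := by
    rw [Measure.fst, hη, Measure.map_map measurable_fst measurable_swap]
    exact h₁.2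
  have hγ₂fst : γ₂.fst = ν := h₂.1
  set K₁ := η.condKernel with hK₁
  set K₂ := γ₂.condKernel with hK₂
  have hd₁ : ν ⊗ₘ K₁ = η := by rw [← hηfst]; exact η.disintegrate η.condKernel
  have hd₂ : ν ⊗ₘ K₂ = γ₂ := by rw [← hγ₂fst]; exact γ₂.disintegrate γ₂.condKernel
  set Γ : Measure (ℝ × (ℝ × ℝ)) := ν ⊗ₘ (K₁ ×ₖ K₂) with hΓ
  refine ⟨Γ.map Prod.snd, ⟨?_, ?_⟩, ?_⟩
  · -- fst marginal is μ
    rw [Measure.map_map measurable_fst measurable_snd]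
    ext s hs
    rw [Measure.map_apply (measurable_fst.comp measurable_snd) hs,
      Measure.compProd_apply (by exact (measurable_fst.comp measurable_snd) hs)]
    have : ∀ y : ℝ, (Prod.mk y ⁻¹' ((Prod.fst ∘ Prod.snd : ℝ × (ℝ × ℝ) → ℝ) ⁻¹' s))
        = s ×ˢ Set.univ := by intro y; ext c; simp
    simp_rw [this, Kernel.prod_apply, Measure.prod_prod, measure_univ, mul_one]
    have : ∫⁻ y, K₁ y s ∂ν = (ν ⊗ₘ K₁) (Set.univ ×ˢ s) := by
      rw [Measure.compProd_apply (MeasurableSet.univ.prod hs)]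
      congr 1; ext y; congr 1; ext c; simp
    rw [this, hd₁]
    rw [hη, Measure.map_apply measurable_swap (MeasurableSet.univ.prod hs)]
    have : Prod.swap ⁻¹' (Set.univ ×ˢ s : Set (ℝ × ℝ)) = s ×ˢ Set.univ := by ext c; simp
    rw [this, ← h₁.1, Measure.map_apply measurable_fst hs]
    congr 1; ext c; simp
  · -- snd marginal is κ
    rw [Measure.map_map measurable_snd measurable_snd]
    ext s hs
    rw [Measure.map_apply (measurable_snd.comp measurable_snd) hs,
      Measure.compProd_apply (by exact (measurable_snd.comp measurable_snd) hs)]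
    have : ∀ y : ℝ, (Prod.mk y ⁻¹' ((Prod.snd ∘ Prod.snd : ℝ × (ℝ × ℝ) → ℝ) ⁻¹' s))
        = Set.univ ×ˢ s := by intro y; ext c; simp
    simp_rw [this, Kernel.prod_apply, Measure.prod_prod, measure_univ, one_mul]
    have : ∫⁻ y, K₂ y s ∂ν = (ν ⊗ₘ K₂) (Set.univ ×ˢ s) := by
      rw [Measure.compProd_apply (MeasurableSet.univ.prod hs)]
      congr 1; ext y; congr 1; ext c; simp
    rw [this, hd₂, ← h₂.2, Measure.map_apply measurable_snd hs]
    congr 1; ext c; simp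
  · -- cost bound
    rw [lintegral_map (measurable_fst.edist measurable_snd) measurable_snd]
    have hb : ∫⁻ p : ℝ × (ℝ × ℝ), edist p.2.1 p.2.2 ∂Γ
        ≤ ∫⁻ p : ℝ × (ℝ × ℝ), (edist p.2.1 p.1 + edist p.1 p.2.2) ∂Γ :=
      lintegral_mono fun p => edist_triangle _ _ _
    refine hb.trans (le_of_eq ?_)
    rw [lintegral_add_left (by fun_prop)]
    congr 1
    · -- first term equals cost γ₁
      rw [hΓ, Measure.lintegral_compProd (by fun_prop)]
      have : ∀ y : ℝ, ∫⁻ c : ℝ × ℝ, edist c.1 y ∂(K₁ ×ₖ K₂) y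
          = ∫⁻ x, edist x y ∂K₁ y := by
        intro y
        rw [Kernel.prod_apply, lintegral_prod _ (by fun_prop)]
        simp [lintegral_const]
      simp_rw [this]
      have : ∫⁻ y, ∫⁻ x, edist x y ∂K₁ y ∂ν = ∫⁻ q : ℝ × ℝ, edist q.2 q.1 ∂(ν ⊗ₘ K₁) := by
        rw [Measure.lintegral_compProd (by fun_prop)]
      rw [this, hd₁, hη, lintegral_map (measurable_snd.edist measurable_fst) measurable_swap]
      simp
    · -- second term equals cost γ₂
      rw [hΓ, Measure.lintegral_compProd (by fun_prop)]
      have : ∀ y : ℝ, ∫⁻ c : ℝ × ℝ, edist y c.2 ∂(K₁ ×ₖ K₂) y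
          = ∫⁻ z, edist y z ∂K₂ y := by
        intro y
        rw [Kernel.prod_apply, lintegral_prod _ (by fun_prop)]
        simp [lintegral_const]
      simp_rw [this]
      rw [← hd₂, Measure.lintegral_compProd (by fun_prop)]

lemma MK_triangle (μ ν κ : Measure ℝ) [IsProbabilityMeasure μ] [IsProbabilityMeasure ν]
    [IsProbabilityMeasure κ] : MK 1 μ κ ≤ MK 1 μ ν + MK 1 ν κ := by
  rw [MK_one μ ν, MK_one ν κ]
  simp only [ENNReal.iInf_add, ENNReal.add_iInf]
  refine le_iInf fun γ₂ => le_iInf fun hγ₂ => le_iInf fun γ₁ => le_iInf fun hγ₁ => ?_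
  obtain ⟨γ, hγ, hcost⟩ := glue_coupling (μ := μ) (ν := ν) (κ := κ) hγ₁ hγ₂
  exact (MK_le_cost hγ).trans hcost

lemma mix_isProb {α : Type*} [MeasurableSpace α] (ν₀ ν₁ : Measure α)
    [IsProbabilityMeasure ν₀] [IsProbabilityMeasure ν₁]
    {t : ℝ} (h0 : 0 ≤ t) (h1 : t ≤ 1) :
    IsProbabilityMeasure (ENNReal.ofReal (1 - t) • ν₀ + ENNReal.ofReal t • ν₁) := by
  constructor
  simp only [Measure.coe_add, Measure.coe_smul, Pi.add_apply, Pi.smul_apply, smul_eq_mul,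
    measure_univ, mul_one]
  rw [← ENNReal.ofReal_add (by linarith) h0]
  norm_num

lemma MK_mix_le (ν₀ ν₁ : Measure ℝ) [IsProbabilityMeasure ν₀] [IsProbabilityMeasure ν₁]
    {a b : ℝ} (ha : 0 ≤ a) (hab : a ≤ b) (hb : b ≤ 1) :
    MK 1 (ENNReal.ofReal (1 - a) • ν₀ + ENNReal.ofReal a • ν₁)
      (ENNReal.ofReal (1 - b) • ν₀ + ENNReal.ofReal b • ν₁)
      ≤ ENNReal.ofReal (b - a) * MK 1 ν₀ ν₁ := by
  rcases eq_or_lt_of_le hab with rfl | hlt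
  · simp [MK_self]
  have hc0 : ENNReal.ofReal (b - a) ≠ 0 := by
    simp [ENNReal.ofReal_eq_zero]; linarith
  have hctop : ENNReal.ofReal (b - a) ≠ ∞ := ENNReal.ofReal_ne_top
  rw [MK_one ν₀ ν₁]
  simp only [ENNReal.mul_iInf_of_ne hc0 hctop]
  refine le_iInf fun γ => le_iInf fun hγ => ?_
  set κ : Measure ℝ := ENNReal.ofReal (1 - b) • ν₀ + ENNReal.ofReal a • ν₁ with hκ
  have hm : Measurable fun t : ℝ => (t, t) := by fun_prop
  set γ' : Measure (ℝ × ℝ) := κ.map (fun t => (t, t)) + ENNReal.ofReal (b - a) • γ with hγ'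
  have hmem : γ' ∈ couplings (ENNReal.ofReal (1 - a) • ν₀ + ENNReal.ofReal a • ν₁)
      (ENNReal.ofReal (1 - b) • ν₀ + ENNReal.ofReal b • ν₁) := by
    constructor
    · rw [hγ', Measure.map_add _ _ measurable_fst, Measure.map_smul,
        (diag_mem_couplings κ).1, hγ.1, hκ]
      rw [show ENNReal.ofReal (1 - a) = ENNReal.ofReal (1 - b) + ENNReal.ofReal (b - a) by
        rw [← ENNReal.ofReal_add (by linarith) (by linarith)]; ring_nf, add_smul]
      abel
    · rw [hγ', Measure.map_add _ _ measurable_snd, Measure.map_smul,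
        (diag_mem_couplings κ).2, hγ.2, hκ]
      rw [show ENNReal.ofReal b = ENNReal.ofReal a + ENNReal.ofReal (b - a) by
        rw [← ENNReal.ofReal_add ha (by linarith)]; ring_nf, add_smul]
      abel
  refine (MK_le_cost hmem).trans (le_of_eq ?_)
  rw [hγ', lintegral_add_measure, lintegral_smul_measure, cost_diag, zero_add, smul_eq_mul]

lemma MK_ne_top (ν₀ ν₁ : Measure ℝ) [IsProbabilityMeasure ν₀] [IsProbabilityMeasure ν₁]
    (h₀ : ∫⁻ t, (‖t‖₊ : ℝ≥0∞) ∂ν₀ ≠ ∞) (h₁ : ∫⁻ t, (‖t‖₊ : ℝ≥0∞) ∂ν₁ ≠ ∞) :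
    MK 1 ν₀ ν₁ ≠ ∞ := by
  have hle : MK 1 ν₀ ν₁ ≤ ∫⁻ t, (‖t‖₊ : ℝ≥0∞) ∂ν₀ + ∫⁻ t, (‖t‖₊ : ℝ≥0∞) ∂ν₁ := by
    refine (MK_le_cost (prod_mem_couplings ν₀ ν₁)).trans ?_
    have hbd : ∀ z : ℝ × ℝ, edist z.1 z.2 ≤ (‖z.1‖₊ : ℝ≥0∞) + (‖z.2‖₊ : ℝ≥0∞) := by
      intro z
      calc edist z.1 z.2 ≤ edist z.1 0 + edist 0 z.2 := edist_triangle _ _ _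
      _ = (‖z.1‖₊ : ℝ≥0∞) + (‖z.2‖₊ : ℝ≥0∞) := by
        rw [edist_comm (0:ℝ)]; simp [enorm_eq_nnnorm]
    refine (lintegral_mono hbd).trans (le_of_eq ?_)
    rw [lintegral_add_left (by fun_prop)]
    congr 1
    · rw [lintegral_prod _ (by fun_prop)]
      simp [lintegral_const]
    · rw [lintegral_prod _ (by fun_prop)]
      simp [lintegral_const]
  exact ne_top_of_le_ne_top (by simp [ENNReal.add_ne_top, h₀, h₁]) hle

lemma MK_mix_eq (ν₀ ν₁ : Measure ℝ) [IsProbabilityMeasure ν₀] [IsProbabilityMeasure ν₁]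
    (hfin : MK 1 ν₀ ν₁ ≠ ∞)
    {a b : ℝ} (ha : 0 ≤ a) (ha1 : a ≤ 1) (hb : 0 ≤ b) (hb1 : b ≤ 1) :
    MK 1 (ENNReal.ofReal (1 - a) • ν₀ + ENNReal.ofReal a • ν₁)
      (ENNReal.ofReal (1 - b) • ν₀ + ENNReal.ofReal b • ν₁)
      = ENNReal.ofReal |a - b| * MK 1 ν₀ ν₁ := by
  -- reduce to a ≤ b
  wlog hab : a ≤ b generalizing a b
  · push_neg at hab
    rw [MK_symm, this hb hb1 ha ha1 hab.le, abs_sub_comm]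
  rw [abs_of_nonpos (by linarith), neg_sub]
  refine le_antisymm (MK_mix_le ν₀ ν₁ ha hab hb1) ?_
  -- lower bound via triangle inequality
  haveI := mix_isProb ν₀ ν₁ ha ha1
  haveI := mix_isProb ν₀ ν₁ hb hb1
  have hmix0 : (ENNReal.ofReal (1 - 0) • ν₀ + ENNReal.ofReal (0:ℝ) • ν₁) = ν₀ := by simp
  have hmix1 : (ENNReal.ofReal (1 - 1) • ν₀ + ENNReal.ofReal (1:ℝ) • ν₁) = ν₁ := by simp
  have h0a : MK 1 ν₀ (ENNReal.ofReal (1 - a) • ν₀ + ENNReal.ofReal a • ν₁)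
      ≤ ENNReal.ofReal a * MK 1 ν₀ ν₁ := by
    have := MK_mix_le ν₀ ν₁ (le_refl 0) ha ha1
    rwa [hmix0, sub_zero] at this
  have hb1' : MK 1 (ENNReal.ofReal (1 - b) • ν₀ + ENNReal.ofReal b • ν₁) ν₁
      ≤ ENNReal.ofReal (1 - b) * MK 1 ν₀ ν₁ := by
    have := MK_mix_le ν₀ ν₁ hb hb1 (le_refl 1)
    rwa [hmix1] at this
  set X := MK 1 (ENNReal.ofReal (1 - a) • ν₀ + ENNReal.ofReal a • ν₁)
      (ENNReal.ofReal (1 - b) • ν₀ + ENNReal.ofReal b • ν₁) with hX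
  have htri : MK 1 ν₀ ν₁ ≤ ENNReal.ofReal a * MK 1 ν₀ ν₁ + X
      + ENNReal.ofReal (1 - b) * MK 1 ν₀ ν₁ := by
    calc MK 1 ν₀ ν₁
        ≤ MK 1 ν₀ (ENNReal.ofReal (1 - a) • ν₀ + ENNReal.ofReal a • ν₁)
          + MK 1 (ENNReal.ofReal (1 - a) • ν₀ + ENNReal.ofReal a • ν₁) ν₁ :=
          MK_triangle _ _ _
      _ ≤ MK 1 ν₀ (ENNReal.ofReal (1 - a) • ν₀ + ENNReal.ofReal a • ν₁)
          + (X + MK 1 (ENNReal.ofReal (1 - b) • ν₀ + ENNReal.ofReal b • ν₁) ν₁) := by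
          gcongr
          exact MK_triangle _ _ _
      _ ≤ ENNReal.ofReal a * MK 1 ν₀ ν₁ + (X + ENNReal.ofReal (1 - b) * MK 1 ν₀ ν₁) := by
          gcongr
      _ = ENNReal.ofReal a * MK 1 ν₀ ν₁ + X + ENNReal.ofReal (1 - b) * MK 1 ν₀ ν₁ := by
          ring
  -- cancellation
  have hsplit : MK 1 ν₀ ν₁ = ENNReal.ofReal (b - a) * MK 1 ν₀ ν₁
      + (ENNReal.ofReal a + ENNReal.ofReal (1 - b)) * MK 1 ν₀ ν₁ := by
    rw [← add_mul, ← ENNReal.ofReal_add (by linarith) (by linarith),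
      ← ENNReal.ofReal_add (by linarith) (by linarith)]
    rw [show b - a + (a + (1 - b)) = 1 by ring]
    simp
  have hne : (ENNReal.ofReal a + ENNReal.ofReal (1 - b)) * MK 1 ν₀ ν₁ ≠ ∞ :=
    ENNReal.mul_ne_top (by simp [ENNReal.add_ne_top]) hfin
  refine (ENNReal.add_le_add_iff_right hne).mp ?_
  calc ENNReal.ofReal (b - a) * MK 1 ν₀ ν₁
      + (ENNReal.ofReal a + ENNReal.ofReal (1 - b)) * MK 1 ν₀ ν₁
      = MK 1 ν₀ ν₁ := hsplit.symm
    _ ≤ ENNReal.ofReal a * MK 1 ν₀ ν₁ + X + ENNReal.ofReal (1 - b) * MK 1 ν₀ ν₁ := htri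
    _ = X + (ENNReal.ofReal a + ENNReal.ofReal (1 - b)) * MK 1 ν₀ ν₁ := by ring

lemma lqNorm_const_mul {Ω : Type*} [MeasurableSpace Ω] {q : ℝ≥0∞} (hq : 1 ≤ q)
    (σ : Measure Ω) (c : ℝ≥0∞) (hc : c ≠ ∞) (f : Ω → ℝ≥0∞) :
    lqNorm q σ (fun ω => c * f ω) = c * lqNorm q σ f := by
  unfold lqNorm
  split_ifs with h
  · exact ENNReal.essSup_const_mul
  · have hq0 : q ≠ 0 := by intro h0; rw [h0] at hq; simp at hq
    have hr : 0 < q.toReal := ENNReal.toReal_pos hq0 h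
    simp_rw [ENNReal.mul_rpow_of_nonneg _ _ hr.le]
    rw [lintegral_const_mul' _ _ (ENNReal.rpow_ne_top_of_nonneg hr.le hc),
      ENNReal.mul_rpow_of_nonneg _ _ (by positivity : (0:ℝ) ≤ 1 / q.toReal),
      ← ENNReal.rpow_mul, mul_one_div_cancel hr.ne', ENNReal.rpow_one]

lemma radon_meas {n : ℕ} (ω : unitSphere n) :
    Measurable (fun x : EuclideanSpace ℝ (Fin n) => ⟪x, (ω : EuclideanSpace ℝ (Fin n))⟫) :=
  (continuous_id.inner continuous_const).measurable

instance radon_isProb {n : ℕ} (μ : Measure (EuclideanSpace ℝ (Fin n)))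
    [IsProbabilityMeasure μ] (ω : unitSphere n) : IsProbabilityMeasure (radon μ ω) :=
  Measure.isProbabilityMeasure_map (radon_meas ω).aemeasurable

lemma radon_add_smul {n : ℕ} (μ ν : Measure (EuclideanSpace ℝ (Fin n))) (c d : ℝ≥0∞)
    (ω : unitSphere n) : radon (c • μ + d • ν) ω = c • radon μ ω + d • radon ν ω := by
  unfold radon
  rw [Measure.map_add _ _ (radon_meas ω), Measure.map_smul, Measure.map_smul]

lemma radon_moment {n : ℕ} (μ : Measure (EuclideanSpace ℝ (Fin n))) (ω : unitSphere n)
    (h : ∫⁻ x, (‖x‖₊ : ℝ≥0∞) ∂μ ≠ ∞) : ∫⁻ t, (‖t‖₊ : ℝ≥0∞) ∂(radon μ ω) ≠ ∞ := by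
  unfold radon
  rw [lintegral_map (by fun_prop) (radon_meas ω)]
  refine ne_top_of_le_ne_top h (lintegral_mono fun x => ?_)
  have h1 : ‖⟪x, (ω : EuclideanSpace ℝ (Fin n))⟫‖ ≤ ‖x‖ := by
    calc ‖⟪x, (ω : EuclideanSpace ℝ (Fin n))⟫‖ ≤ ‖x‖ * ‖(ω : EuclideanSpace ℝ (Fin n))‖ :=
      norm_inner_le_norm _ _
    _ = ‖x‖ := by
      have : ‖(ω : EuclideanSpace ℝ (Fin n))‖ = 1 := by
        simpa using mem_sphere_zero_iff_norm.mp ω.2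
      rw [this, mul_one]
  exact ENNReal.coe_le_coe.mpr (by simpa [← NNReal.coe_le_coe] using h1)

/-- linear interpolation is a minimal geodesic in `(𝒫₁(ℝ^n), MK_{1,q})`, with
`MK_{1,q}((1-τ₁)μ₀+τ₁μ₁, (1-τ₂)μ₀+τ₂μ₁) = |τ₁-τ₂| · MK_{1,q}(μ₀,μ₁)`; in particular
`(𝒫₁(ℝ^n), MK_{1,q})` is a geodesic space. -/
theorem sliced_MK1_linear_geodesic (q : ℝ≥0∞) (hq : 1 ≤ q) (n : ℕ) (hn : 1 ≤ n)
    (μ₀ μ₁ : Measure (EuclideanSpace ℝ (Fin n))) (hμ₀ : MemPp 1 μ₀) (hμ₁ : MemPp 1 μ₁) :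
    (∀ τ₁ ∈ Set.Icc (0:ℝ) 1, ∀ τ₂ ∈ Set.Icc (0:ℝ) 1,
      MKpq 1 q (ENNReal.ofReal (1 - τ₁) • μ₀ + ENNReal.ofReal τ₁ • μ₁)
          (ENNReal.ofReal (1 - τ₂) • μ₀ + ENNReal.ofReal τ₂ • μ₁)
        = ENNReal.ofReal |τ₁ - τ₂| * MKpq 1 q μ₀ μ₁) ∧
    ∃ ρ : ℝ → Measure (EuclideanSpace ℝ (Fin n)),
      ρ 0 = μ₀ ∧ ρ 1 = μ₁ ∧ (∀ τ ∈ Set.Icc (0:ℝ) 1, MemPp 1 (ρ τ)) ∧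
      ∀ τ₁ ∈ Set.Icc (0:ℝ) 1, ∀ τ₂ ∈ Set.Icc (0:ℝ) 1,
        MKpq 1 q (ρ τ₁) (ρ τ₂) ≤ ENNReal.ofReal |τ₁ - τ₂| * MKpq 1 q μ₀ μ₁ := by
  obtain ⟨hp₀, hm₀⟩ := hμ₀
  obtain ⟨hp₁, hm₁⟩ := hμ₁
  have hm₀' : ∫⁻ x, (‖x‖₊ : ℝ≥0∞) ∂μ₀ ≠ ∞ := by simpa [ENNReal.rpow_one] using hm₀
  have hm₁' : ∫⁻ x, (‖x‖₊ : ℝ≥0∞) ∂μ₁ ≠ ∞ := by simpa [ENNReal.rpow_one] using hm₁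
  have key : ∀ τ₁ ∈ Set.Icc (0:ℝ) 1, ∀ τ₂ ∈ Set.Icc (0:ℝ) 1,
      MKpq 1 q (ENNReal.ofReal (1 - τ₁) • μ₀ + ENNReal.ofReal τ₁ • μ₁)
          (ENNReal.ofReal (1 - τ₂) • μ₀ + ENNReal.ofReal τ₂ • μ₁)
        = ENNReal.ofReal |τ₁ - τ₂| * MKpq 1 q μ₀ μ₁ := by
    intro τ₁ h₁ τ₂ h₂
    obtain ⟨h10, h11⟩ := h₁
    obtain ⟨h20, h21⟩ := h₂
    have hfun : (fun ω => MK 1 (radon (ENNReal.ofReal (1 - τ₁) • μ₀ + ENNReal.ofReal τ₁ • μ₁) ω)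
          (radon (ENNReal.ofReal (1 - τ₂) • μ₀ + ENNReal.ofReal τ₂ • μ₁) ω))
        = fun ω => ENNReal.ofReal |τ₁ - τ₂| * MK 1 (radon μ₀ ω) (radon μ₁ ω) := by
      funext ω
      rw [radon_add_smul, radon_add_smul]
      exact MK_mix_eq (radon μ₀ ω) (radon μ₁ ω)
        (MK_ne_top _ _ (radon_moment _ _ hm₀') (radon_moment _ _ hm₁')) h10 h11 h20 h21
    show lqNorm q (sphereProb n) _ = _
    rw [hfun, lqNorm_const_mul hq _ _ ENNReal.ofReal_ne_top]
    rfl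
  refine ⟨key, fun τ => ENNReal.ofReal (1 - τ) • μ₀ + ENNReal.ofReal τ • μ₁, by simp, by simp,
    fun τ hτ => ⟨mix_isProb μ₀ μ₁ hτ.1 hτ.2, ?_⟩, fun τ₁ h₁ τ₂ h₂ => le_of_eq (key τ₁ h₁ τ₂ h₂)⟩
  simp only [ENNReal.rpow_one, lintegral_add_measure, lintegral_smul_measure]
  exact ENNReal.add_ne_top.mpr ⟨ENNReal.mul_ne_top ENNReal.ofReal_ne_top hm₀',
    ENNReal.mul_ne_top ENNReal.ofReal_ne_top hm₁'⟩

end
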